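/- arXiv:2501.06427 — 2 statements merged into one kernel-verified Lean document; each statement's English description precedes it below -/
import Mathlib

section
/- Let x, x' be vectors in R^N and U_1,...,U_N be i.i.d. uniform random variables on [-1,1]. Define round_U(x) coordinatewise by round_{U_i}(x_i) = 1 if x_i >= U_i and -1 otherwise. Then E[ ||round_U(x) - round_U(x')||^2 ] <= 2 ||x - x'|| sqrt(N). -/
open MeasureTheory

/-- Randomized rounding of a real number `x` with threshold `u`:
outputs `1` if `x ≥ u` and `-1` otherwise. -/
noncomputable def rnd (u x : ℝ) : ℝ := if u ≤ x then 1 else -1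

/-- The uniform probability measure on `[-1, 1]`. -/
noncomputable def unifIcc : Measure ℝ := (2 : ENNReal)⁻¹ • volume.restrict (Set.Icc (-1 : ℝ) 1)

instance : IsProbabilityMeasure unifIcc := by
  constructor
  simp [unifIcc, Real.volume_Icc]
  norm_num
  rw [ENNReal.inv_mul_cancel] <;> norm_num

lemma map_eval {N : ℕ} (i : Fin N) :
    Measure.map (Function.eval i) (Measure.pi fun _ : Fin N => unifIcc) = unifIcc := by
  ext s hs
  rw [Measure.map_apply (measurable_pi_apply i) hs, Set.eval_preimage, Measure.pi_pi]
  rw [Finset.prod_eq_single i (fun j _ hj => by simp [Function.update_of_ne hj])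
    (by simp), Function.update_self]

lemma rnd_meas (a : ℝ) : Measurable fun u => rnd u a := by
  unfold rnd
  exact Measurable.ite measurableSet_Iic measurable_const measurable_const

lemma rnd_sq_eq (a b : ℝ) (hab : a ≤ b) :
    (fun u => (rnd u a - rnd u b) ^ 2) =
      (Set.Ioc a b).indicator (fun _ => (4 : ℝ)) := by
  funext u
  simp only [rnd, Set.indicator_apply, Set.mem_Ioc]
  by_cases h1 : u ≤ a
  · simp [h1, h1.trans hab, not_lt.mpr h1]
  · by_cases h2 : u ≤ b
    · simp only [h1, h2, if_true, if_false, not_le.mp h1, and_self, if_pos]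
      norm_num
    · simp [h1, h2]

lemma onedim' (a b : ℝ) (hab : a ≤ b) :
    ∫ u, (rnd u a - rnd u b) ^ 2 ∂unifIcc ≤ 2 * (b - a) := by
  rw [show (∫ u, (rnd u a - rnd u b) ^ 2 ∂unifIcc)
      = ∫ u, (Set.Ioc a b).indicator (fun _ => (4:ℝ)) u ∂unifIcc by
    rw [← rnd_sq_eq a b hab]]
  rw [integral_indicator_const _ measurableSet_Ioc]
  have h1 : unifIcc (Set.Ioc a b) ≤ (2 : ENNReal)⁻¹ * ENNReal.ofReal (b - a) := by
    simp only [unifIcc, Measure.smul_apply, smul_eq_mul]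
    gcongr
    calc volume.restrict (Set.Icc (-1:ℝ) 1) (Set.Ioc a b)
        ≤ volume (Set.Ioc a b) := Measure.restrict_le_self _
      _ = ENNReal.ofReal (b - a) := Real.volume_Ioc
  have h2 : (unifIcc (Set.Ioc a b)).toReal ≤ (b - a) / 2 := by
    have := ENNReal.toReal_mono (by finiteness) h1
    rw [ENNReal.toReal_mul, ENNReal.toReal_inv, ENNReal.toReal_ofNat,
      ENNReal.toReal_ofReal (by linarith)] at this
    linarith
  simp only [smul_eq_mul, measureReal_def]
  linarith

lemma onedim (a b : ℝ) :
    ∫ u, (rnd u a - rnd u b) ^ 2 ∂unifIcc ≤ 2 * |a - b| := by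
  rcases le_total a b with h | h
  · rw [abs_sub_comm, abs_of_nonneg (by linarith)]; exact onedim' a b h
  · rw [abs_of_nonneg (by linarith)]
    calc ∫ u, (rnd u a - rnd u b) ^ 2 ∂unifIcc
        = ∫ u, (rnd u b - rnd u a) ^ 2 ∂unifIcc := by
          congr 1; funext u; ring
      _ ≤ 2 * (a - b) := onedim' b a h

lemma rnd_sq_le (a b u : ℝ) : (rnd u a - rnd u b) ^ 2 ≤ 4 := by
  unfold rnd
  by_cases h1 : u ≤ a <;> by_cases h2 : u ≤ b <;> simp [h1, h2] <;> norm_num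

/-- For fixed `x, x' ∈ ℝ^N` and i.i.d. `U_i ~ Unif([-1,1])`,
`E ‖round_U(x) - round_U(x')‖² ≤ 2 ‖x - x'‖ √N`. -/
theorem stmt_0 (N : ℕ) (x x' : Fin N → ℝ) :
    ∫ U : Fin N → ℝ, (∑ i, (rnd (U i) (x i) - rnd (U i) (x' i)) ^ 2)
        ∂(Measure.pi fun _ => unifIcc)
      ≤ 2 * Real.sqrt (∑ i, (x i - x' i) ^ 2) * Real.sqrt N := by
  have fmeas : ∀ i : Fin N, Measurable fun u => (rnd u (x i) - rnd u (x' i)) ^ 2 :=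
    fun i => ((rnd_meas (x i)).sub (rnd_meas (x' i))).pow_const 2
  have hint : ∀ i : Fin N, Integrable
      (fun U : Fin N → ℝ => (rnd (U i) (x i) - rnd (U i) (x' i)) ^ 2)
      (Measure.pi fun _ => unifIcc) := by
    intro i
    refine (integrable_const (4:ℝ)).mono'
      (((fmeas i).comp (measurable_pi_apply i)).aestronglyMeasurable) ?_
    filter_upwards with U
    rw [Real.norm_eq_abs, abs_of_nonneg (by positivity)]
    exact rnd_sq_le _ _ _
  rw [integral_finset_sum _ (fun i _ => hint i)]
  have hcoord : ∀ i : Fin N,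
      (∫ U : Fin N → ℝ, (rnd (U i) (x i) - rnd (U i) (x' i)) ^ 2
        ∂(Measure.pi fun _ => unifIcc))
      = ∫ u, (rnd u (x i) - rnd u (x' i)) ^ 2 ∂unifIcc := by
    intro i
    have h := integral_map (μ := Measure.pi fun _ : Fin N => unifIcc)
      (φ := Function.eval i) (measurable_pi_apply i).aemeasurable
      (f := fun u => (rnd u (x i) - rnd u (x' i)) ^ 2)
      (by rw [map_eval i]; exact (fmeas i).aestronglyMeasurable)
    rw [map_eval i] at h
    exact h.symm
  calc (∑ i, ∫ U : Fin N → ℝ, (rnd (U i) (x i) - rnd (U i) (x' i)) ^ 2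
        ∂(Measure.pi fun _ => unifIcc))
      ≤ ∑ i, 2 * |x i - x' i| := by
        refine Finset.sum_le_sum fun i _ => ?_
        rw [hcoord i]; exact onedim _ _
    _ = 2 * ∑ i, |x i - x' i| := by rw [Finset.mul_sum]
    _ ≤ 2 * (Real.sqrt (∑ i, (x i - x' i) ^ 2) * Real.sqrt N) := by
        gcongr 2 * ?_
        have h1 : (∑ i, |x i - x' i|) ^ 2 ≤ N * ∑ i, (x i - x' i) ^ 2 := by
          have := sq_sum_le_card_mul_sum_sq
            (s := Finset.univ) (f := fun i => |x i - x' i|)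
          simpa [sq_abs] using this
        have h2 : (∑ i, |x i - x' i|) ≤ Real.sqrt ((N : ℝ) * ∑ i, (x i - x' i) ^ 2) := by
          rw [← Real.sqrt_sq (Finset.sum_nonneg fun i _ => abs_nonneg _)]
          exact Real.sqrt_le_sqrt (by exact_mod_cast h1)
        rw [Real.sqrt_mul (Nat.cast_nonneg N), mul_comm] at h2
        exact h2
    _ = 2 * Real.sqrt (∑ i, (x i - x' i) ^ 2) * Real.sqrt N := by ring
end

section
/- Let x, x' be vectors in R^N and U_1,...,U_N be i.i.d. uniform on [-1,1], and define the coordinatewise randomized rounding round_U as above. Then E[ ||round_U(x) - round_U(x')||^4 ] <= 4 ||x-x'||^2 N + 8 ||x-x'|| sqrt(N). -/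
open MeasureTheory

instance inst_s1 : IsProbabilityMeasure unifIcc := by
  constructor
  simp only [unifIcc, Measure.smul_apply, Measure.restrict_apply MeasurableSet.univ,
    Set.univ_inter, Real.volume_Icc, smul_eq_mul]
  rw [show (1 : ℝ) - (-1) = 2 by norm_num, ENNReal.ofReal_ofNat]
  simp [ENNReal.inv_mul_cancel]

/-- Type synonym for `ℝ` equipped with the uniform measure on `[-1,1]` as its volume. -/
def UR : Type := ℝ

instance : MeasurableSpace UR := inferInstanceAs (MeasurableSpace ℝ)

noncomputable instance : MeasureSpace UR := ⟨unifIcc⟩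

instance : IsProbabilityMeasure (volume : Measure UR) :=
  inferInstanceAs (IsProbabilityMeasure unifIcc)

instance : SigmaFinite (volume : Measure UR) :=
  inferInstanceAs (SigmaFinite unifIcc)

/-- Fubini for the product of uniform measures. -/
lemma fubini_unif {N : ℕ} (g : Fin N → ℝ → ℝ) :
    ∫ U : Fin N → ℝ, ∏ k, g k (U k) ∂(Measure.pi fun _ => unifIcc)
      = ∏ k, ∫ u, g k u ∂unifIcc :=
  MeasureTheory.integral_fintype_prod_eq_prod g

lemma int_unif {N : ℕ} {g : Fin N → ℝ → ℝ} (hg : ∀ k, Integrable (g k) unifIcc) :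
    Integrable (fun U : Fin N → ℝ => ∏ k, g k (U k)) (Measure.pi fun _ => unifIcc) :=
  MeasureTheory.Integrable.fintype_prod hg

/-- For fixed `x, x' ∈ ℝ^N` and i.i.d. `U_i ~ Unif([-1,1])`,
`E ‖round_U(x) - round_U(x')‖⁴ ≤ 4 ‖x - x'‖² N + 8 ‖x - x'‖ √N`. -/
theorem stmt_1 (N : ℕ) (x x' : Fin N → ℝ) :
    ∫ U : Fin N → ℝ, (∑ i, (rnd (U i) (x i) - rnd (U i) (x' i)) ^ 2) ^ 2
        ∂(Measure.pi fun _ => unifIcc)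
      ≤ 4 * (∑ i, (x i - x' i) ^ 2) * N
        + 8 * Real.sqrt (∑ i, (x i - x' i) ^ 2) * Real.sqrt N := by
  classical
  set f : Fin N → ℝ → ℝ := fun i u => (rnd u (x i) - rnd u (x' i)) ^ 2 with hf
  -- f is an indicator
  have hind : ∀ i u, f i u = (Set.uIoc (x' i) (x i)).indicator (fun _ => (4:ℝ)) u := by
    intro i u
    simp only [hf, rnd, Set.indicator_apply, Set.mem_uIoc]
    by_cases h1 : u ≤ x i <;> by_cases h2 : u ≤ x' i
    · rw [if_pos h1, if_pos h2,
        if_neg (by rintro (⟨h, -⟩ | ⟨h, -⟩); exacts [h.not_ge h2, h.not_ge h1])]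
      norm_num
    · rw [if_pos h1, if_neg h2, if_pos (Or.inl ⟨not_le.mp h2, h1⟩)]
      norm_num
    · rw [if_neg h1, if_pos h2, if_pos (Or.inr ⟨not_le.mp h1, h2⟩)]
      norm_num
    · rw [if_neg h1, if_neg h2,
        if_neg (by rintro (⟨-, h⟩ | ⟨-, h⟩); exacts [h1 h, h2 h])]
      norm_num
  have hindf : ∀ i, f i = (Set.uIoc (x' i) (x i)).indicator (fun _ => (4:ℝ)) :=
    fun i => funext (hind i)
  have hf_nonneg : ∀ i u, 0 ≤ f i u := fun i u => sq_nonneg _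
  have hf_le : ∀ i u, f i u ≤ 4 := by
    intro i u
    rw [hind i u]
    by_cases h : u ∈ Set.uIoc (x' i) (x i) <;> simp [Set.indicator_apply, h]
  have hint : ∀ i, Integrable (f i) unifIcc := by
    intro i
    rw [hindf i]
    exact (integrable_const _).indicator measurableSet_uIoc
  have hint2 : ∀ i, Integrable (fun u => f i u * f i u) unifIcc := by
    intro i
    have : (fun u => f i u * f i u)
        = (Set.uIoc (x' i) (x i)).indicator (fun _ => (16:ℝ)) := by
      funext u
      rw [hind i u]
      by_cases h : u ∈ Set.uIoc (x' i) (x i) <;> simp [Set.indicator_apply, h] <;> norm_num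
    rw [this]
    exact (integrable_const _).indicator measurableSet_uIoc
  set a : Fin N → ℝ := fun i => ∫ u, f i u ∂unifIcc with ha
  have ha_nonneg : ∀ i, 0 ≤ a i := fun i => integral_nonneg (hf_nonneg i)
  have ha_le : ∀ i, a i ≤ 2 * |x i - x' i| := by
    intro i
    have h1 : a i = (unifIcc (Set.uIoc (x' i) (x i))).toReal * 4 := by
      rw [ha]
      simp only
      rw [hindf i, integral_indicator_const _ measurableSet_uIoc, smul_eq_mul]
      rfl
    rw [h1]
    have h2 : unifIcc (Set.uIoc (x' i) (x i)) ≤ ENNReal.ofReal (|x i - x' i| / 2) := by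
      have hvol : volume (Set.uIoc (x' i) (x i) ∩ Set.Icc (-1 : ℝ) 1)
          ≤ ENNReal.ofReal (|x i - x' i|) := by
        calc volume (Set.uIoc (x' i) (x i) ∩ Set.Icc (-1 : ℝ) 1)
            ≤ volume (Set.uIoc (x' i) (x i)) := measure_mono Set.inter_subset_left
          _ = ENNReal.ofReal (|x i - x' i|) := by
              rw [Set.uIoc, Real.volume_Ioc]
              congr 1
              rw [max_sub_min_eq_abs, abs_sub_comm]
      rw [unifIcc, Measure.smul_apply, Measure.restrict_apply measurableSet_uIoc,
        smul_eq_mul, ENNReal.ofReal_div_of_pos (by norm_num), ENNReal.ofReal_ofNat,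
        ENNReal.div_eq_inv_mul]
      exact mul_le_mul_right hvol _
    have h3 : (unifIcc (Set.uIoc (x' i) (x i))).toReal ≤ |x i - x' i| / 2 :=
      ENNReal.toReal_le_of_le_ofReal (by positivity) h2
    nlinarith [abs_nonneg (x i - x' i)]
  -- key bound on pairwise integrals
  have key : ∀ (i j : Fin N),
      (∫ U : Fin N → ℝ, f i (U i) * f j (U j) ∂(Measure.pi fun _ => unifIcc))
        ≤ a i * a j + (if i = j then 4 * a i else 0) ∧
      Integrable (fun U : Fin N → ℝ => f i (U i) * f j (U j))
        (Measure.pi fun _ => unifIcc) := by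
    intro i j
    set g : Fin N → ℝ → ℝ :=
      fun k u => (if k = i then f i u else 1) * (if k = j then f j u else 1) with hg
    have hgint : ∀ k, Integrable (g k) unifIcc := by
      intro k
      by_cases hki : k = i <;> by_cases hkj : k = j
      · have hij : i = j := hki.symm.trans hkj
        have hgk : g k = fun u => f i u * f i u := by
          funext u; simp [hg, hki, hkj, ← hij]
        rw [hgk]; exact hint2 i
      · have hij : ¬i = j := fun h => hkj (hki.trans h)
        have hgk : g k = f i := by funext u; simp [hg, hki, hij]
        rw [hgk]; exact hint i
      · have hji : ¬j = i := fun h => hki (hkj.trans h)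
        have hgk : g k = f j := by funext u; simp [hg, hkj, hji]
        rw [hgk]; exact hint j
      · have hgk : g k = fun _ => (1 : ℝ) := by funext u; simp [hg, hki, hkj]
        rw [hgk]; exact integrable_const 1
    have hprod : ∀ U : Fin N → ℝ, f i (U i) * f j (U j) = ∏ k, g k (U k) := by
      intro U
      simp only [hg]
      rw [Finset.prod_mul_distrib, Finset.prod_ite_eq' Finset.univ i (fun k => f i (U k)),
        Finset.prod_ite_eq' Finset.univ j (fun k => f j (U k))]
      simp
    have hInt : Integrable (fun U : Fin N → ℝ => f i (U i) * f j (U j))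
        (Measure.pi fun _ => unifIcc) := by
      have := int_unif hgint
      simpa only [← hprod] using this
    have hTeq : (∫ U : Fin N → ℝ, f i (U i) * f j (U j) ∂(Measure.pi fun _ => unifIcc))
        = ∏ k, ∫ u, g k u ∂unifIcc := by
      simp_rw [hprod]
      exact fubini_unif g
    refine ⟨?_, hInt⟩
    rw [hTeq]
    by_cases hij : i = j
    · subst hij
      rw [← Finset.mul_prod_erase _ _ (Finset.mem_univ i)]
      have h1 : ∀ k ∈ Finset.univ.erase i, (∫ u, g k u ∂unifIcc) = 1 := by
        intro k hk
        have hki := Finset.ne_of_mem_erase hk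
        simp [hg, hki]
      rw [Finset.prod_eq_one h1, mul_one]
      have h2 : (∫ u, g i u ∂unifIcc) = ∫ u, f i u * f i u ∂unifIcc := by
        simp [hg]
      rw [h2, if_pos rfl]
      have h3 : (∫ u, f i u * f i u ∂unifIcc) ≤ ∫ u, 4 * f i u ∂unifIcc := by
        apply integral_mono (hint2 i) ((hint i).const_mul 4)
        intro u
        exact mul_le_mul_of_nonneg_right (hf_le i u) (hf_nonneg i u)
      rw [integral_const_mul] at h3
      nlinarith [ha_nonneg i]
    · have hji : j ≠ i := fun h => hij h.symm
      rw [← Finset.mul_prod_erase _ _ (Finset.mem_univ i),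
        ← Finset.mul_prod_erase _ _ (Finset.mem_erase.mpr ⟨hji, Finset.mem_univ j⟩)]
      have h1 : ∀ k ∈ (Finset.univ.erase i).erase j, (∫ u, g k u ∂unifIcc) = 1 := by
        intro k hk
        have hkj := Finset.ne_of_mem_erase hk
        have hki := Finset.ne_of_mem_erase (Finset.mem_of_mem_erase hk)
        simp [hg, hki, hkj]
      rw [Finset.prod_eq_one h1, mul_one]
      have h2 : (∫ u, g i u ∂unifIcc) = a i := by simp [hg, hij, ha]
      have h3 : (∫ u, g j u ∂unifIcc) = a j := by simp [hg, hji, ha]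
      rw [h2, h3, if_neg hij, add_zero]
  -- expand the square
  have h1 : ∀ U : Fin N → ℝ,
      (∑ i, (rnd (U i) (x i) - rnd (U i) (x' i)) ^ 2) ^ 2
        = ∑ i, ∑ j, f i (U i) * f j (U j) := by
    intro U
    rw [show (∑ i, (rnd (U i) (x i) - rnd (U i) (x' i)) ^ 2) = ∑ i, f i (U i) from rfl,
      sq, Finset.sum_mul_sum]
  have hL : (∫ U : Fin N → ℝ, (∑ i, (rnd (U i) (x i) - rnd (U i) (x' i)) ^ 2) ^ 2
        ∂(Measure.pi fun _ => unifIcc))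
      = ∑ i, ∑ j, ∫ U : Fin N → ℝ, f i (U i) * f j (U j)
          ∂(Measure.pi fun _ => unifIcc) := by
    simp_rw [h1]
    rw [integral_finset_sum _ fun i _ =>
      integrable_finset_sum _ fun j _ => (key i j).2]
    exact Finset.sum_congr rfl fun i _ =>
      integral_finset_sum _ fun j _ => (key i j).2
  rw [hL]
  have hsum : (∑ i, ∑ j, ∫ U : Fin N → ℝ, f i (U i) * f j (U j)
        ∂(Measure.pi fun _ => unifIcc))
      ≤ (∑ i, a i) * (∑ j, a j) + 4 * ∑ i, a i := by
    calc (∑ i, ∑ j, ∫ U : Fin N → ℝ, f i (U i) * f j (U j)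
          ∂(Measure.pi fun _ => unifIcc))
        ≤ ∑ i, ∑ j, (a i * a j + (if i = j then 4 * a i else 0)) :=
          Finset.sum_le_sum fun i _ => Finset.sum_le_sum fun j _ => (key i j).1
      _ = ∑ i, (a i * ∑ j, a j + 4 * a i) := by
          refine Finset.sum_congr rfl fun i _ => ?_
          rw [Finset.sum_add_distrib, ← Finset.mul_sum,
            Finset.sum_ite_eq Finset.univ i (fun _ => 4 * a i),
            if_pos (Finset.mem_univ i)]
      _ = (∑ i, a i) * (∑ j, a j) + 4 * ∑ i, a i := by
          rw [Finset.sum_add_distrib, ← Finset.sum_mul, ← Finset.mul_sum]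
  refine hsum.trans ?_
  -- final arithmetic
  set A := ∑ i, a i with hA
  set D := ∑ i, (x i - x' i) ^ 2 with hD
  have hD0 : 0 ≤ D := Finset.sum_nonneg fun i _ => sq_nonneg _
  have hA0 : 0 ≤ A := Finset.sum_nonneg fun i _ => ha_nonneg i
  have habs : (∑ i, |x i - x' i|) ^ 2 ≤ N * D := by
    have := sq_sum_le_card_mul_sum_sq (s := (Finset.univ : Finset (Fin N)))
      (f := fun i => |x i - x' i|)
    simpa [sq_abs, Finset.card_univ, hD] using this
  have habs' : (∑ i, |x i - x' i|) ≤ Real.sqrt N * Real.sqrt D := by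
    rw [← Real.sqrt_mul (Nat.cast_nonneg N)]
    exact Real.le_sqrt_of_sq_le habs
  have hAle : A ≤ 2 * (Real.sqrt N * Real.sqrt D) := by
    calc A ≤ ∑ i, 2 * |x i - x' i| := Finset.sum_le_sum fun i _ => ha_le i
      _ = 2 * ∑ i, |x i - x' i| := by rw [Finset.mul_sum]
      _ ≤ 2 * (Real.sqrt N * Real.sqrt D) := by linarith [habs']
  have hsN : Real.sqrt N ^ 2 = (N : ℝ) := Real.sq_sqrt (Nat.cast_nonneg N)
  have hsD : Real.sqrt D ^ 2 = D := Real.sq_sqrt hD0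
  nlinarith [Real.sqrt_nonneg D, Real.sqrt_nonneg (N : ℝ), sq_nonneg A, hAle, hA0,
    mul_le_mul hAle hAle hA0 (by positivity)]
end
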